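/- (Structural bound, q = 1 version for sampled Gram matrices.) Let C ∈ ℝ^{I×T}, let Q ∈ ℝ^{I×μ} have orthonormal columns, let R ∈ ℝ^{μ×(μ+K)}, F ∈ ℝ^{(μ+K)×I}, and G ∈ ℝ^{I×(μ+K)}. Then ‖C C^T − Q Q^T C C^T‖_F^2 ≤ 2 ‖C C^T G F − C C^T‖_F^2 + 2 ‖F‖_2^2 · ‖Q R − C C^T G‖_F^2. -/

import Mathlib

/-!
With `P = Q Qᵀ` and `B = C Cᵀ`, we have `(1 - P) Q = 0`, hence
`(1 - P) B = (1 - P) (B - B G F) - (1 - P) (Q R - B G) F`.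
The projection `1 - P` does not increase the Frobenius norm, right multiplication by `F` scales it
by at most `‖F‖₂`, and `(a + b)² ≤ 2 a² + 2 b²`.
-/

open Matrix

noncomputable section

/-- Frobenius norm of a real matrix. -/
def frob {m n : Type*} [Fintype m] [Fintype n] (A : Matrix m n ℝ) : ℝ :=
  Real.sqrt (∑ i, ∑ j, (A i j) ^ 2)

/-- Spectral norm of a real matrix. -/
def spec {m n : Type*} [Fintype m] [Fintype n] [DecidableEq n] (A : Matrix m n ℝ) : ℝ :=
  ‖LinearMap.toContinuousLinearMap (Matrix.toEuclideanLin A)‖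

lemma mul_transpose_mul_mul_of_transpose_mul_self {m n r : Type*} [Fintype m] [Fintype r]
    [DecidableEq r] {Q : Matrix m r ℝ} (hQ : Qᵀ * Q = 1) (M : Matrix r n ℝ) :
    Q * (Qᵀ * (Q * M)) = Q * M := by
  rw [← Matrix.mul_assoc Qᵀ, hQ, Matrix.one_mul]

section Frobenius

variable {m n r : Type*} [Fintype m] [Fintype n] [Fintype r]

lemma frob_nonneg (A : Matrix m n ℝ) : 0 ≤ frob A :=
  Real.sqrt_nonneg _

lemma frob_sq (A : Matrix m n ℝ) : frob A ^ 2 = ∑ i, ∑ j, A i j ^ 2 :=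
  Real.sq_sqrt (by positivity)

attribute [local instance] Matrix.frobeniusNormedAddCommGroup in
lemma frob_eq_frobenius_norm (A : Matrix m n ℝ) : frob A = ‖A‖ := by
  simp only [frob, frobenius_norm_def, Real.norm_eq_abs, Real.rpow_two, sq_abs,
    Real.sqrt_eq_rpow]

attribute [local instance] Matrix.frobeniusNormedAddCommGroup in
lemma frob_sub_le (A B : Matrix m n ℝ) : frob (A - B) ≤ frob A + frob B := by
  simp only [frob_eq_frobenius_norm]
  exact norm_sub_le A B

attribute [local instance] Matrix.frobeniusNormedAddCommGroup in
lemma frob_sub_comm (A B : Matrix m n ℝ) : frob (A - B) = frob (B - A) := by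
  simp only [frob_eq_frobenius_norm]
  exact norm_sub_rev A B

lemma frob_sq_eq_trace (A : Matrix m n ℝ) : frob A ^ 2 = trace (Aᵀ * A) := by
  rw [frob_sq]
  simp only [trace, diag, mul_apply, transpose_apply, sq]
  exact Finset.sum_comm

lemma frob_sq_eq_sum_norm_row_sq (A : Matrix m n ℝ) :
    frob A ^ 2 = ∑ i, ‖WithLp.toLp 2 (A i)‖ ^ 2 := by
  simp only [frob_sq, EuclideanSpace.real_norm_sq_eq]

lemma frob_sub_proj_sq_add_frob_transpose_mul_sq [DecidableEq r] {Q : Matrix m r ℝ} (hQ : Qᵀ * Q = 1)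
    (M : Matrix m n ℝ) : frob (M - Q * Qᵀ * M) ^ 2 + frob (Qᵀ * M) ^ 2 = frob M ^ 2 := by
  have hgram : (M - Q * Qᵀ * M)ᵀ * (M - Q * Qᵀ * M) = Mᵀ * M - (Qᵀ * M)ᵀ * (Qᵀ * M) := by
    simp only [transpose_sub, transpose_mul, transpose_transpose, Matrix.sub_mul,
      Matrix.mul_sub, Matrix.mul_assoc, mul_transpose_mul_mul_of_transpose_mul_self hQ]
    abel
  rw [frob_sq_eq_trace, frob_sq_eq_trace, frob_sq_eq_trace, hgram, trace_sub, sub_add_cancel]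

lemma frob_sub_proj_le [DecidableEq r] {Q : Matrix m r ℝ} (hQ : Qᵀ * Q = 1)
    (M : Matrix m n ℝ) : frob (M - Q * Qᵀ * M) ≤ frob M :=
  le_of_sq_le_sq (by linarith [frob_sub_proj_sq_add_frob_transpose_mul_sq hQ M, sq_nonneg (frob (Qᵀ * M))])
    (frob_nonneg M)

end Frobenius

section Spectral

variable {m n k : Type*} [Fintype m] [Fintype n] [Fintype k] [DecidableEq n]

lemma spec_nonneg (A : Matrix m n ℝ) : 0 ≤ spec A :=
  norm_nonneg _

open scoped Matrix.Norms.L2Operator in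
lemma spec_transpose [DecidableEq m] (A : Matrix m n ℝ) : spec Aᵀ = spec A := by
  rw [← conjTranspose_eq_transpose_of_trivial]
  exact l2_opNorm_conjTranspose A

lemma norm_mulVec_le_spec_mul (A : Matrix m n ℝ) (x : n → ℝ) :
    ‖WithLp.toLp 2 (A *ᵥ x)‖ ≤ spec A * ‖WithLp.toLp 2 x‖ :=
  (LinearMap.toContinuousLinearMap (toEuclideanLin A)).le_opNorm (WithLp.toLp 2 x)

lemma frob_mul_le_spec_mul (Y : Matrix m k ℝ) (F : Matrix k n ℝ) :
    frob (Y * F) ≤ spec F * frob Y := by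
  classical
  refine le_of_sq_le_sq ?_ (mul_nonneg (spec_nonneg F) (frob_nonneg Y))
  rw [mul_pow, frob_sq_eq_sum_norm_row_sq, frob_sq_eq_sum_norm_row_sq, Finset.mul_sum]
  refine Finset.sum_le_sum fun i _ => ?_
  rw [← mul_pow, mul_apply_eq_vecMul, ← mulVec_transpose, ← spec_transpose F]
  exact pow_le_pow_left₀ (norm_nonneg _) (norm_mulVec_le_spec_mul Fᵀ (Y i)) 2

end Spectral

lemma frob_sub_proj_le_of_factor {m n k r : Type*} [Fintype m] [Fintype n] [Fintype k]
    [Fintype r] [DecidableEq n] [DecidableEq r] {Q : Matrix m r ℝ} (hQ : Qᵀ * Q = 1)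
    (B : Matrix m n ℝ) (G : Matrix n k ℝ) (F : Matrix k n ℝ) (R : Matrix r k ℝ) :
    frob (B - Q * Qᵀ * B) ≤ frob (B * G * F - B) + spec F * frob (Q * R - B * G) := by
  set X := B - B * G * F
  set Y := (Q * R - B * G) * F
  have hdecomp : B - Q * Qᵀ * B = (X - Q * Qᵀ * X) - (Y - Q * Qᵀ * Y) := by
    simp only [X, Y, Matrix.sub_mul, Matrix.mul_sub, Matrix.mul_assoc,
      mul_transpose_mul_mul_of_transpose_mul_self hQ]
    abel
  calc frob (B - Q * Qᵀ * B)
      ≤ frob (X - Q * Qᵀ * X) + frob (Y - Q * Qᵀ * Y) := hdecomp ▸ frob_sub_le _ _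
    _ ≤ frob X + frob Y := add_le_add (frob_sub_proj_le hQ X) (frob_sub_proj_le hQ Y)
    _ ≤ frob (B * G * F - B) + spec F * frob (Q * R - B * G) := by
      rw [frob_sub_comm]
      exact add_le_add_right (frob_mul_le_spec_mul _ F) _

/-- Structural bound, `q = 1` version for sampled Gram matrices. -/
theorem stmt10 {I T μ K : ℕ}
    (C : Matrix (Fin I) (Fin T) ℝ) (Q : Matrix (Fin I) (Fin μ) ℝ) (hQ : Qᵀ * Q = 1)
    (R : Matrix (Fin μ) (Fin (μ + K)) ℝ) (F : Matrix (Fin (μ + K)) (Fin I) ℝ)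
    (G : Matrix (Fin I) (Fin (μ + K)) ℝ) :
    frob (C * Cᵀ - Q * Qᵀ * (C * Cᵀ)) ^ 2 ≤
      2 * frob (C * Cᵀ * G * F - C * Cᵀ) ^ 2 +
        2 * spec F ^ 2 * frob (Q * R - C * Cᵀ * G) ^ 2 := by
  calc frob (C * Cᵀ - Q * Qᵀ * (C * Cᵀ)) ^ 2
      ≤ (frob (C * Cᵀ * G * F - C * Cᵀ) + spec F * frob (Q * R - C * Cᵀ * G)) ^ 2 :=
        pow_le_pow_left₀ (frob_nonneg _) (frob_sub_proj_le_of_factor hQ (C * Cᵀ) G F R) 2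
    _ ≤ 2 * (frob (C * Cᵀ * G * F - C * Cᵀ) ^ 2 +
          (spec F * frob (Q * R - C * Cᵀ * G)) ^ 2) := add_sq_le
    _ = 2 * frob (C * Cᵀ * G * F - C * Cᵀ) ^ 2 +
          2 * spec F ^ 2 * frob (Q * R - C * Cᵀ * G) ^ 2 := by ring

end
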